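/- arXiv:1106.0721 — 5 statements merged into one kernel-verified Lean document; each statement's English description precedes it below -/
import Mathlib

section
/- Under the DINA model with true m×k Q-matrix Q and true parameters c, g ∈ [0,1]^m assumed known, suppose Q is complete, c ≇ g, and the attribute distribution p is diversified. For each sample size N let Q̂_N be any measurable choice of a minimizer of Q' ↦ S_{c,g}(Q') over all m×k binary matrices Q'. Then P(Q̂_N ∼ Q) → 1 as N → ∞. Moreover, there is a measurable choice of a column permutation of Q̂_N under which P(Q̂_N = Q) → 1, and for any such choice, any measurable choice p̂_N of a minimizer of p' ↦ |T_{c,g}(Q̂_N) p' − α_N| over probability vectors p' on {0,1}^k satisfies P(|p̂_N − p| > ε) → 0 for every ε > 0. -/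
open MeasureTheory ProbabilityTheory Matrix Finset Filter

namespace QMatrix

variable {m k : ℕ}

/-- DINA capability indicator. -/
def xiDINA (Q : Fin m → Fin k → Bool) (i : Fin m) (A : Fin k → Bool) : ℝ :=
  if ∀ j, Q i j = true → A j = true then 1 else 0

/-- DINO capability indicator. -/
def xiDINO (Q : Fin m → Fin k → Bool) (i : Fin m) (A : Fin k → Bool) : ℝ :=
  if ∃ j, Q i j = true ∧ A j = true then 1 else 0

/-- Positive response probability under DINA. -/
noncomputable def piDINA (c g : Fin m → ℝ) (Q : Fin m → Fin k → Bool)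
    (i : Fin m) (A : Fin k → Bool) : ℝ :=
  (c i - g i) * xiDINA Q i A + g i

/-- Positive response probability under DINO. -/
noncomputable def piDINO (c g : Fin m → ℝ) (Q : Fin m → Fin k → Bool)
    (i : Fin m) (A : Fin k → Bool) : ℝ :=
  (c i - g i) * xiDINO Q i A + g i

/-- Entry of the saturated T-matrix for the row indexed by `S` and column indexed by `A`. -/
noncomputable def Tent (c g : Fin m → ℝ) (Q : Fin m → Fin k → Bool)
    (S : Finset (Fin m)) (A : Fin k → Bool) : ℝ :=
  ∏ i ∈ S, piDINA c g Q i A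

/-- Entry of the saturated U-matrix for the row indexed by `S` and column indexed by `A`. -/
noncomputable def Uent (c g : Fin m → ℝ) (Q : Fin m → Fin k → Bool)
    (S : Finset (Fin m)) (A : Fin k → Bool) : ℝ :=
  1 - ∏ i ∈ S, (1 - piDINO c g Q i A)

/-- The saturated T-matrix, rows indexed by nonempty subsets of items. -/
noncomputable def Tmat (c g : Fin m → ℝ) (Q : Fin m → Fin k → Bool) :
    Matrix {S : Finset (Fin m) // S.Nonempty} (Fin k → Bool) ℝ :=
  fun S A => Tent c g Q S.1 A

/-- The saturated U-matrix, rows indexed by nonempty subsets of items. -/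
noncomputable def Umat (c g : Fin m → ℝ) (Q : Fin m → Fin k → Bool) :
    Matrix {S : Finset (Fin m) // S.Nonempty} (Fin k → Bool) ℝ :=
  fun S A => Uent c g Q S.1 A

/-- The augmented T-matrix `T̃` (the row indexed by `∅` is the all-ones row). -/
noncomputable def Ttilde (c g : Fin m → ℝ) (Q : Fin m → Fin k → Bool) :
    Matrix (Finset (Fin m)) (Fin k → Bool) ℝ :=
  fun S A => Tent c g Q S A

/-- The augmented U-matrix `Ũ` (the row indexed by `∅` is the all-ones row). -/
noncomputable def Utilde (c g : Fin m → ℝ) (Q : Fin m → Fin k → Bool) :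
    Matrix (Finset (Fin m)) (Fin k → Bool) ℝ :=
  fun S A => if S.Nonempty then Uent c g Q S A else 1

/-- A Q-matrix is complete if each standard basis vector appears among its rows. -/
def Complete (Q : Fin m → Fin k → Bool) : Prop :=
  ∀ j : Fin k, ∃ i : Fin m, ∀ j' : Fin k, Q i j' = decide (j' = j)

/-- `QEquiv Q Q'` : `Q'` is obtained from `Q` by permuting columns (`Q ∼ Q'`). -/
def QEquiv (Q Q' : Fin m → Fin k → Bool) : Prop :=
  ∃ σ : Equiv.Perm (Fin k), ∀ i j, Q' i j = Q i (σ j)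

/-- `c ≇ g` : all coordinates differ. -/
def Ncong (c g : Fin m → ℝ) : Prop := ∀ i, c i ≠ g i

/-- Probability vector on attribute profiles. -/
def ProbVec (p : (Fin k → Bool) → ℝ) : Prop :=
  (∀ A, 0 ≤ p A) ∧ ∑ A, p A = 1

/-- Euclidean norm of a finitely indexed vector. -/
noncomputable def eNorm {ι : Type*} [Fintype ι] (v : ι → ℝ) : ℝ :=
  Real.sqrt (∑ i, v i ^ 2)

/-- pmf of one draw `(A, R)` under the DINA model. -/
noncomputable def dinaPMF (c g : Fin m → ℝ) (Q : Fin m → Fin k → Bool)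
    (p : (Fin k → Bool) → ℝ) (a : Fin k → Bool) (r : Fin m → Bool) : ℝ :=
  p a * ∏ i, (if r i then piDINA c g Q i a else 1 - piDINA c g Q i a)

/-- pmf of one draw `(A, R)` under the DINO model. -/
noncomputable def dinoPMF (c g : Fin m → ℝ) (Q : Fin m → Fin k → Bool)
    (p : (Fin k → Bool) → ℝ) (a : Fin k → Bool) (r : Fin m → Bool) : ℝ :=
  p a * ∏ i, (if r i then piDINO c g Q i a else 1 - piDINO c g Q i a)

/-- The empirical vector `α_N` computed from responses `R 0, …, R (N-1)`. -/
noncomputable def alphaVec (R : ℕ → (Fin m → Bool)) (N : ℕ) :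
    {S : Finset (Fin m) // S.Nonempty} → ℝ :=
  fun S => (∑ r ∈ Finset.range N, ∏ i ∈ S.1, (if R r i then (1:ℝ) else 0)) / N

/-- The empirical vector `β_N` computed from responses `R 0, …, R (N-1)`. -/
noncomputable def betaVec (R : ℕ → (Fin m → Bool)) (N : ℕ) :
    {S : Finset (Fin m) // S.Nonempty} → ℝ :=
  fun S => (∑ r ∈ Finset.range N, (if ∃ i ∈ S.1, R r i = true then (1:ℝ) else 0)) / N

/-- Objective `S_{c,g}(Q') = inf_{p'} |T_{c,g}(Q') p' - α|`. -/
noncomputable def Sobj (c g : Fin m → ℝ) (Q' : Fin m → Fin k → Bool)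
    (α : {S : Finset (Fin m) // S.Nonempty} → ℝ) : ℝ :=
  sInf {x | ∃ p', ProbVec p' ∧ x = eNorm (Tmat c g Q' *ᵥ p' - α)}

/-- Objective `V_{c,g}(Q') = inf_{p'} |U_{c,g}(Q') p' - β|`. -/
noncomputable def Vobj (c g : Fin m → ℝ) (Q' : Fin m → Fin k → Bool)
    (β : {S : Finset (Fin m) // S.Nonempty} → ℝ) : ℝ :=
  sInf {x | ∃ p', ProbVec p' ∧ x = eNorm (Umat c g Q' *ᵥ p' - β)}

end QMatrix

/-!
Expanding the product that defines `Tent`, the moment `(T_{c,g}(Q) p)_S` is a combination of the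
upper masses `P_p(A ≥ ⋁_{i ∈ t} Q_i)`, `t ⊆ S`, triangular in `t` with diagonal coefficient
`∏_{i ∈ S} (c_i - g_i) ≠ 0`. So `T_{c,g}(Q') p' = T_{c,g}(Q) p` means equal upper masses at all
joins of rows. As `Q` is complete, every profile is such a join; as `p` is diversified, its upper
mass is strictly antitone. Sending a set `J` of attributes to the join of the rows of `Q'` at the
items whose `Q`-row is a single attribute of `J` is then a strictly monotone, union-preserving
self-map of the attribute lattice, hence induced by a permutation, and this permutation maps
every row of `Q` onto the corresponding row of `Q'`.
For `Q' = Q`, the upper masses determine `p` by Möbius inversion.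

Compactness of the simplex and finiteness of the set of Q-matrices make both identifications
uniform, and the strong law of large numbers gives `α_N → T_{c,g}(Q) p` almost surely, hence in
probability.
-/

open Topology

namespace Finset

def orderIsoBoolFun (α : Type*) [Fintype α] [DecidableEq α] : Finset α ≃o (α → Bool) where
  toFun s a := decide (a ∈ s)
  invFun v := {a | v a}
  left_inv s := by ext; simp
  right_inv v := by funext; simp
  map_rel_iff' := by simp [Pi.le_def, Bool.le_iff_imp, subset_iff]

@[simp]
theorem orderIsoBoolFun_apply {α : Type*} [Fintype α] [DecidableEq α] (s : Finset α) (a : α) :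
    orderIsoBoolFun α s a = decide (a ∈ s) :=
  rfl

@[simp]
theorem mem_orderIsoBoolFun_symm {α : Type*} [Fintype α] [DecidableEq α] (v : α → Bool) (a : α) :
    a ∈ (orderIsoBoolFun α).symm v ↔ v a = true :=
  mem_filter.trans (and_iff_right (mem_univ a))

end Finset

theorem StrictAnti.eq_of_forall_apply_sup_eq {α β : Type*} [SemilatticeSup α] [Preorder β]
    {F : α → β} (hF : StrictAnti F) {s t : α} (h : ∀ u, F (s ⊔ u) = F (t ⊔ u)) : s = t := by
  have hle {s t : α} (h : F s = F (t ⊔ s)) : t ≤ s := by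
    by_contra hts
    have hlt : s < t ⊔ s := lt_of_le_of_ne le_sup_right fun heq => hts (heq ▸ le_sup_left)
    exact (hF hlt).ne' h
  refine le_antisymm (hle ?_) (hle ?_)
  · simpa using (h t).symm
  · simpa using h s

namespace Finset

variable {α : Type*} [DecidableEq α]

theorem card_add_card_le_card_of_strictMono {β : Type*} {ψ : Finset α → Finset β}
    (hψ : StrictMono ψ) (s : Finset α) : #s + #(ψ ∅) ≤ #(ψ s) := by
  induction s using Finset.induction_on with
  | empty => simp
  | insert a s ha ih =>
    have := card_lt_card (hψ (ssubset_insert ha))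
    rw [card_insert_of_notMem ha]
    omega

theorem card_eq_card_of_strictMono [Fintype α] {ψ : Finset α → Finset α} (hψ : StrictMono ψ)
    (s : Finset α) : #(ψ s) = #s := by
  -- `t ↦ (ψ tᶜ)ᶜ` is strictly monotone too; at `sᶜ` it bounds `#(ψ s)` from above.
  have hdual : StrictMono fun t => (ψ tᶜ)ᶜ := fun t u htu =>
    compl_lt_compl_iff_lt.2 (hψ (compl_lt_compl_iff_lt.2 htu))
  have h₁ := card_add_card_le_card_of_strictMono hψ s
  have h₂ := card_add_card_le_card_of_strictMono hdual sᶜ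
  simp only [compl_compl, compl_empty, card_compl] at h₂
  have := card_le_univ (ψ s)
  have := card_le_univ (ψ univ)
  have := card_le_univ s
  omega

theorem exists_perm_of_strictMono_of_map_union [Fintype α] {ψ : Finset α → Finset α}
    (hψ : StrictMono ψ) (hunion : ∀ s t, ψ (s ∪ t) = ψ s ∪ ψ t) :
    ∃ σ : Equiv.Perm α, ∀ s, ψ s = s.image σ := by
  have hsingle (a : α) : ∃ b, ψ {a} = {b} :=
    card_eq_one.1 ((card_eq_card_of_strictMono hψ _).trans (card_singleton a))
  choose f hf using hsingle
  have himage (s : Finset α) : ψ s = s.image f := by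
    induction s using Finset.induction_on with
    | empty => simpa using card_eq_card_of_strictMono hψ ∅
    | insert a s _ ih => rw [insert_eq, hunion, hf, ih, image_union, image_singleton]
  have hinj : Function.Injective f := by
    rw [← Set.injOn_univ, ← coe_univ, ← card_image_iff, ← himage,
      card_eq_card_of_strictMono hψ]
  exact ⟨Equiv.ofBijective f hinj.bijective_of_finite, himage⟩

theorem sup_image_eq_self {ι α : Type*} [DecidableEq ι] [DecidableEq α] {R : ι → Finset α}
    {e : α → ι} (he : ∀ a, R (e a) = {a}) (s : Finset α) : (s.image e).sup R = s := by
  simp [sup_image, Function.comp_def, he]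

theorem exists_perm_image_of_apply_sup_eq {ι α β : Type*} [DecidableEq ι] [Fintype α]
    [DecidableEq α] [Preorder β] {R R' : ι → Finset α} (hR : ∀ a, ∃ i, R i = {a})
    {F F' : Finset α → β} (hF : StrictAnti F) (h : ∀ S : Finset ι, F' (S.sup R') = F (S.sup R)) :
    ∃ σ : Equiv.Perm α, ∀ i, R' i = (R i).image σ := by
  choose e he using hR
  set ψ : Finset α → Finset α := fun s => (s.image e).sup R'
  have hψF (s : Finset α) : F' (ψ s) = F s := by rw [h, sup_image_eq_self he]
  have hψ : StrictMono ψ := fun s t hst =>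
    lt_of_le_of_ne (sup_mono (image_subset_image hst.le)) fun heq =>
      (hF hst).ne' (by rw [← hψF, ← hψF]; exact congrArg F' heq)
  obtain ⟨σ, hσ⟩ := exists_perm_of_strictMono_of_map_union hψ fun s t => by
    simp only [ψ, image_union, sup_union, sup_eq_union]
  refine ⟨σ, fun i => ?_⟩
  have hrow (u : Finset α) : F ((R' i).image σ.symm ⊔ u) = F (R i ⊔ u) := by
    have := h (insert i (u.image e))
    rw [sup_insert, sup_insert, sup_image_eq_self he] at this
    change F' (R' i ⊔ ψ u) = _ at this
    rw [← this, ← hψF, hσ, hσ, sup_eq_union, sup_eq_union, image_union, image_image,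
      Equiv.self_comp_symm, image_id]
  rw [← hF.eq_of_forall_apply_sup_eq hrow, image_image, Equiv.self_comp_symm, image_id]

theorem eq_of_forall_sum_powerset_mul_eq {ι R : Type*} [DecidableEq ι] [Ring R]
    [NoZeroDivisors R] {w : Finset ι → Finset ι → R} {x y : Finset ι → R} (hw : ∀ s, w s s ≠ 0)
    (h : ∀ s, ∑ t ∈ s.powerset, w t s * x t = ∑ t ∈ s.powerset, w t s * y t) : x = y := by
  funext s
  induction s using Finset.strongInduction with
  | H s ih =>
    have hsplit (z : Finset ι → R) : ∑ t ∈ s.powerset, w t s * z t =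
        w s s * z s + ∑ t ∈ s.powerset.erase s, w t s * z t :=
      (add_sum_erase _ _ (mem_powerset_self s)).symm
    have hs := h s
    rw [hsplit, hsplit, sum_congr rfl fun t ht => by
      rw [ih t (ssubset_iff_subset_ne.2
        ⟨mem_powerset.1 (mem_of_mem_erase ht), ne_of_mem_erase ht⟩)]] at hs
    exact mul_left_cancel₀ (hw s) (add_right_cancel hs)

end Finset

instance Pi.decidableLE {ι : Type*} {π : ι → Type*} [Fintype ι] [∀ i, LE (π i)]
    [∀ i, DecidableLE (π i)] : DecidableLE (∀ i, π i) :=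
  fun _ _ => Fintype.decidableForallFintype

section UpperMass

variable {α : Type*} [Fintype α] [PartialOrder α] [DecidableLE α]

def upperMass (p : α → ℝ) (v : α) : ℝ := ∑ a with v ≤ a, p a

theorem upperMass_strictAnti {p : α → ℝ} (hp : ∀ a, 0 < p a) : StrictAnti (upperMass p) :=
  fun v _ hvw => sum_lt_sum_of_subset
    (monotone_filter_right _ fun _ _ hwa => hvw.le.trans hwa)
    (mem_filter.2 ⟨mem_univ v, le_rfl⟩) (fun hv => hvw.not_ge (mem_filter.1 hv).2) (hp v)
    fun a _ _ => (hp a).le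

theorem upperMass_injective : Function.Injective (upperMass (α := α)) := by
  classical
  intro x y h
  funext v
  induction v using WellFoundedGT.induction with
  | _ v ih =>
    have hsplit (z : α → ℝ) : upperMass z v = z v + ∑ a with v < a, z a := by
      rw [upperMass, ← add_sum_erase _ _ (mem_filter.2 ⟨mem_univ v, le_rfl⟩)]
      congr 2
      ext a
      simp [lt_iff_le_and_ne, and_comm, eq_comm]
    have hv := congrFun h v
    rw [hsplit, hsplit, sum_congr rfl fun a ha => ih a (mem_filter.1 ha).2] at hv
    exact add_right_cancel hv

end UpperMass

theorem sum_prod_ite_mul_prod_ite {ι : Type*} [Fintype ι] [DecidableEq ι] (π : ι → ℝ)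
    (S : Finset ι) :
    ∑ r : ι → Bool, (∏ i, if r i then π i else 1 - π i) * ∏ i ∈ S, (if r i then 1 else 0) =
      ∏ i ∈ S, π i := by
  calc _ = ∑ r : ι → Bool, ∏ i, (if r i then π i else 1 - π i) *
          (if i ∈ S then (if r i then 1 else 0) else 1) := by
        refine sum_congr rfl fun r _ => ?_
        rw [prod_mul_distrib, prod_ite_mem, univ_inter]
    _ = ∏ i, ∑ b : Bool, (if b then π i else 1 - π i) *
          (if i ∈ S then (if b then 1 else 0) else 1) := by rw [Fintype.prod_sum]
    _ = ∏ i, if i ∈ S then π i else 1 := by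
        refine prod_congr rfl fun i _ => ?_
        split_ifs <;> simp
    _ = ∏ i ∈ S, π i := by rw [prod_ite_mem, univ_inter]

theorem integral_comp_eq_sum {Ω β : Type*} [MeasurableSpace Ω] {P : Measure Ω}
    [IsFiniteMeasure P] [Fintype β] [MeasurableSpace β] [DiscreteMeasurableSpace β] {Y : Ω → β}
    (hY : Measurable Y)
    {ρ : β → ℝ} (hρ : ∀ y, 0 ≤ ρ y) (hYρ : ∀ y, P (Y ⁻¹' {y}) = ENNReal.ofReal (ρ y))
    (φ : β → ℝ) : ∫ ω, φ (Y ω) ∂P = ∑ y, ρ y * φ y := by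
  rw [← integral_map hY.aemeasurable Measurable.of_discrete.aestronglyMeasurable,
    integral_fintype .of_finite]
  refine sum_congr rfl fun y _ => ?_
  rw [measureReal_def, Measure.map_apply hY (measurableSet_singleton y), hYρ,
    ENNReal.toReal_ofReal (hρ y), smul_eq_mul]

theorem identDistrib_of_measure_preimage_singleton {Ω β : Type*} [MeasurableSpace Ω]
    {P : Measure Ω} [Countable β] [MeasurableSpace β] [MeasurableSingletonClass β] {X Y : Ω → β}
    (hX : Measurable X) (hY : Measurable Y) (h : ∀ y, P (X ⁻¹' {y}) = P (Y ⁻¹' {y})) :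
    IdentDistrib X Y P P where
  aemeasurable_fst := hX.aemeasurable
  aemeasurable_snd := hY.aemeasurable
  map_eq := Measure.ext_of_singleton fun y => by
    rw [Measure.map_apply hX (measurableSet_singleton y),
      Measure.map_apply hY (measurableSet_singleton y), h]

theorem tendsto_measure_of_tendsto_measure_compl {ι Ω : Type*} [MeasurableSpace Ω]
    {μ : Measure Ω} [IsProbabilityMeasure μ] {l : Filter ι} {s : ι → Set Ω}
    (h : Tendsto (fun i => μ (s i)ᶜ) l (𝓝 0)) : Tendsto (fun i => μ (s i)) l (𝓝 1) := by
  have h₁ : Tendsto (fun i => 1 - μ (s i)ᶜ) l (𝓝 1) := by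
    simpa using ENNReal.Tendsto.sub tendsto_const_nhds h (.inl ENNReal.one_ne_top)
  refine tendsto_of_tendsto_of_tendsto_of_le_of_le h₁ tendsto_const_nhds (fun i => ?_)
    fun _ => prob_le_one
  rw [tsub_le_iff_right, ← measure_univ (μ := μ)]
  exact measure_univ_le_add_compl _

theorem tendsto_measure_compl_of_tendsto_measure {ι Ω : Type*} [MeasurableSpace Ω]
    {μ : Measure Ω} [IsProbabilityMeasure μ] {l : Filter ι} {s : ι → Set Ω}
    (hs : ∀ i, MeasurableSet (s i)) (h : Tendsto (fun i => μ (s i)) l (𝓝 1)) :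
    Tendsto (fun i => μ (s i)ᶜ) l (𝓝 0) := by
  simp_rw [prob_compl_eq_one_sub (hs _)]
  simpa using ENNReal.Tendsto.sub tendsto_const_nhds h (.inl ENNReal.one_ne_top)

namespace QMatrix

variable {m k : ℕ}

theorem QEquiv.refl (Q : Fin m → Fin k → Bool) : QEquiv Q Q :=
  ⟨1, fun _ _ => rfl⟩

theorem QEquiv.symm {Q Q' : Fin m → Fin k → Bool} (h : QEquiv Q Q') : QEquiv Q' Q :=
  let ⟨σ, hσ⟩ := h
  ⟨σ.symm, fun i j => by rw [hσ, σ.apply_symm_apply]⟩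

theorem xiDINA_eq_ite (Q : Fin m → Fin k → Bool) (i : Fin m) (A : Fin k → Bool) :
    xiDINA Q i A = if Q i ≤ A then 1 else 0 := by
  simp only [xiDINA, Pi.le_def, Bool.le_iff_imp]

theorem prod_xiDINA (Q : Fin m → Fin k → Bool) (S : Finset (Fin m)) (A : Fin k → Bool) :
    ∏ i ∈ S, xiDINA Q i A = if S.sup Q ≤ A then 1 else 0 := by
  simp_rw [xiDINA_eq_ite]
  split_ifs with h
  · exact prod_eq_one fun i hi => if_pos (Finset.sup_le_iff.1 h i hi)
  · obtain ⟨i, hi, hiA⟩ : ∃ i ∈ S, ¬Q i ≤ A := by simpa using h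
    exact prod_eq_zero hi (if_neg hiA)

theorem sum_Tent_mul (c g : Fin m → ℝ) (Q : Fin m → Fin k → Bool) (p : (Fin k → Bool) → ℝ)
    (S : Finset (Fin m)) :
    ∑ A, Tent c g Q S A * p A = ∑ t ∈ S.powerset,
      ((∏ i ∈ t, (c i - g i)) * ∏ i ∈ S \ t, g i) * upperMass p (t.sup Q) := by
  simp_rw [Tent, piDINA, prod_add, prod_mul_distrib, prod_xiDINA, sum_mul]
  rw [sum_comm]
  refine sum_congr rfl fun t _ => ?_
  rw [upperMass, sum_filter, mul_sum]
  refine sum_congr rfl fun A _ => ?_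
  split_ifs <;> ring

theorem upperMass_sup_eq_of_mulVec_eq {c g : Fin m → ℝ} (hcg : Ncong c g)
    {Q Q' : Fin m → Fin k → Bool} {p p' : (Fin k → Bool) → ℝ} (hp : ∑ A, p A = 1)
    (hp' : ∑ A, p' A = 1) (h : Tmat c g Q' *ᵥ p' = Tmat c g Q *ᵥ p) (S : Finset (Fin m)) :
    upperMass p' (S.sup Q') = upperMass p (S.sup Q) := by
  have hsum (S : Finset (Fin m)) :
      ∑ A, Tent c g Q' S A * p' A = ∑ A, Tent c g Q S A * p A := by
    rcases S.eq_empty_or_nonempty with rfl | hS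
    · simp [Tent, hp, hp']
    · simpa [Tmat, mulVec, dotProduct] using congrFun h ⟨S, hS⟩
  refine congrFun (eq_of_forall_sum_powerset_mul_eq
    (w := fun t S => (∏ i ∈ t, (c i - g i)) * ∏ i ∈ S \ t, g i)
    (x := fun t => upperMass p' (t.sup Q')) (y := fun t => upperMass p (t.sup Q))
    (fun S => ?_) fun S => ?_) S
  · simp [prod_ne_zero_iff, sub_ne_zero, hcg _]
  · simpa only [sum_Tent_mul] using hsum S

def rowSet (Q : Fin m → Fin k → Bool) (i : Fin m) : Finset (Fin k) :=
  (Finset.orderIsoBoolFun (Fin k)).symm (Q i)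

theorem orderIsoBoolFun_sup_rowSet (Q : Fin m → Fin k → Bool) (S : Finset (Fin m)) :
    Finset.orderIsoBoolFun (Fin k) (S.sup (rowSet Q)) = S.sup Q := by
  rw [map_finset_sup]
  simp [rowSet, Function.comp_def]

theorem Complete.exists_rowSet_eq_singleton {Q : Fin m → Fin k → Bool} (hQ : Complete Q)
    (j : Fin k) : ∃ i, rowSet Q i = {j} := by
  obtain ⟨i, hi⟩ := hQ j
  refine ⟨i, ?_⟩
  ext j'
  simp [rowSet, hi]

theorem Complete.exists_sup_eq {Q : Fin m → Fin k → Bool} (hQ : Complete Q) (v : Fin k → Bool) :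
    ∃ S : Finset (Fin m), S.sup Q = v := by
  choose e he using hQ.exists_rowSet_eq_singleton
  refine ⟨((Finset.orderIsoBoolFun (Fin k)).symm v).image e, ?_⟩
  rw [← orderIsoBoolFun_sup_rowSet, sup_image_eq_self he, OrderIso.apply_symm_apply]

theorem qEquiv_of_mulVec_eq {c g : Fin m → ℝ} (hcg : Ncong c g) {Q Q' : Fin m → Fin k → Bool}
    (hQ : Complete Q) {p p' : (Fin k → Bool) → ℝ} (hp : ∑ A, p A = 1) (hdiv : ∀ A, 0 < p A)
    (hp' : ∑ A, p' A = 1) (h : Tmat c g Q' *ᵥ p' = Tmat c g Q *ᵥ p) : QEquiv Q Q' := by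
  obtain ⟨σ, hσ⟩ := exists_perm_image_of_apply_sup_eq hQ.exists_rowSet_eq_singleton
    ((upperMass_strictAnti hdiv).comp_strictMono (Finset.orderIsoBoolFun (Fin k)).strictMono)
    (R' := rowSet Q') (F' := upperMass p' ∘ Finset.orderIsoBoolFun (Fin k)) fun S => by
      simp only [Function.comp_apply, orderIsoBoolFun_sup_rowSet]
      exact upperMass_sup_eq_of_mulVec_eq hcg hp hp' h S
  refine ⟨σ.symm, fun i j => ?_⟩
  have := congrArg (j ∈ ·) (hσ i)
  rw [← Equiv.coe_toEmbedding, ← map_eq_image, mem_map_equiv] at this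
  simp only [rowSet, mem_orderIsoBoolFun_symm, eq_iff_iff] at this
  exact Bool.eq_iff_iff.2 this

theorem eq_of_mulVec_eq {c g : Fin m → ℝ} (hcg : Ncong c g) {Q : Fin m → Fin k → Bool}
    (hQ : Complete Q) {p p' : (Fin k → Bool) → ℝ} (hp : ∑ A, p A = 1) (hp' : ∑ A, p' A = 1)
    (h : Tmat c g Q *ᵥ p' = Tmat c g Q *ᵥ p) : p' = p :=
  upperMass_injective <| funext fun v => by
    obtain ⟨S, rfl⟩ := hQ.exists_sup_eq v
    exact upperMass_sup_eq_of_mulVec_eq hcg hp hp' h S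

section EuclideanNorm

variable {ι : Type*} [Fintype ι]

theorem eNorm_sub_eq_dist (u v : ι → ℝ) :
    eNorm (u - v) = dist (WithLp.toLp 2 u) (WithLp.toLp 2 v) := by
  simp [eNorm, EuclideanSpace.dist_eq, Real.dist_eq, sq_abs]

theorem eNorm_sub_comm (u v : ι → ℝ) : eNorm (u - v) = eNorm (v - u) := by
  simp only [eNorm_sub_eq_dist, dist_comm]

theorem eNorm_sub_le_add (u v w : ι → ℝ) : eNorm (u - w) ≤ eNorm (u - v) + eNorm (v - w) := by
  simp only [eNorm_sub_eq_dist]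
  exact dist_triangle _ _ _

theorem eNorm_sub_pos {u v : ι → ℝ} (h : u ≠ v) : 0 < eNorm (u - v) := by
  rw [eNorm_sub_eq_dist]
  exact dist_pos.2 ((WithLp.toLp_injective 2).ne h)

theorem continuous_eNorm_sub (y : ι → ℝ) : Continuous fun q => eNorm (q - y) := by
  simp only [eNorm_sub_eq_dist]
  exact (PiLp.continuous_toLp 2 _).dist continuous_const

theorem continuous_eNorm_mulVec_sub {κ : Type*} [Fintype κ] (M : Matrix ι κ ℝ) (y : ι → ℝ) :
    Continuous fun q => eNorm (M *ᵥ q - y) :=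
  (continuous_eNorm_sub y).comp (continuous_const.matrix_mulVec continuous_id)

theorem eNorm_sub_le_two_mul_of_le {u v a : ι → ℝ}
    (h : eNorm (u - a) ≤ eNorm (v - a)) : eNorm (u - v) ≤ 2 * eNorm (a - v) := by
  linarith [eNorm_sub_le_add u a v, eNorm_sub_comm v a]

end EuclideanNorm

theorem exists_pos_le_eNorm_of_not_qEquiv {c g : Fin m → ℝ} (hcg : Ncong c g)
    {Q : Fin m → Fin k → Bool} (hQ : Complete Q) {p : (Fin k → Bool) → ℝ} (hp : ∑ A, p A = 1)
    (hdiv : ∀ A, 0 < p A) :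
    ∃ δ > 0, ∀ Q', ¬QEquiv Q Q' → ∀ q, ProbVec q →
      δ ≤ eNorm (Tmat c g Q' *ᵥ q - Tmat c g Q *ᵥ p) := by
  have hK : IsCompact ({Q' | ¬QEquiv Q Q'} ×ˢ stdSimplex ℝ (Fin k → Bool)) :=
    (Set.toFinite _).isCompact.prod (isCompact_stdSimplex ℝ _)
  have hf : Continuous fun x : (Fin m → Fin k → Bool) × ((Fin k → Bool) → ℝ) =>
      eNorm (Tmat c g x.1 *ᵥ x.2 - Tmat c g Q *ᵥ p) := by
    refine continuous_prod_of_discrete_left.2 fun Q' => ?_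
    exact continuous_eNorm_mulVec_sub (Tmat c g Q') _
  have hpos : ∀ x ∈ {Q' | ¬QEquiv Q Q'} ×ˢ stdSimplex ℝ (Fin k → Bool),
      0 < eNorm (Tmat c g x.1 *ᵥ x.2 - Tmat c g Q *ᵥ p) := fun x hx =>
    eNorm_sub_pos fun heq => hx.1 (qEquiv_of_mulVec_eq hcg hQ hp hdiv hx.2.2 heq)
  obtain ⟨δ, hδ, hle⟩ := hK.exists_forall_le' hf.continuousOn hpos
  exact ⟨δ, hδ, fun Q' hQ' q hq => hle (Q', q) ⟨hQ', hq⟩⟩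

theorem exists_pos_le_eNorm_of_le_eNorm_sub {c g : Fin m → ℝ} (hcg : Ncong c g)
    {Q : Fin m → Fin k → Bool} (hQ : Complete Q) {p : (Fin k → Bool) → ℝ} (hp : ∑ A, p A = 1)
    (ε : ℝ) (hε : 0 < ε) :
    ∃ δ > 0, ∀ q, ProbVec q → ε ≤ eNorm (q - p) →
      δ ≤ eNorm (Tmat c g Q *ᵥ q - Tmat c g Q *ᵥ p) := by
  have hK : IsCompact (stdSimplex ℝ (Fin k → Bool) ∩ {q | ε ≤ eNorm (q - p)}) :=
    (isCompact_stdSimplex ℝ _).inter_right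
      (isClosed_le continuous_const (continuous_eNorm_sub p))
  have hpos : ∀ q ∈ stdSimplex ℝ (Fin k → Bool) ∩ {q | ε ≤ eNorm (q - p)},
      0 < eNorm (Tmat c g Q *ᵥ q - Tmat c g Q *ᵥ p) := fun q hq => eNorm_sub_pos fun heq => by
    have hεq : ε ≤ eNorm (q - p) := hq.2
    rw [eq_of_mulVec_eq hcg hQ hp hq.1.2 heq, eNorm_sub_eq_dist, dist_self] at hεq
    exact hε.not_ge hεq
  obtain ⟨δ, hδ, hle⟩ := hK.exists_forall_le'
    (continuous_eNorm_mulVec_sub (Tmat c g Q) (Tmat c g Q *ᵥ p)).continuousOn hpos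
  exact ⟨δ, hδ, fun q hq hεq => hle q ⟨hq, hεq⟩⟩

theorem Sobj_le {c g : Fin m → ℝ} {Q : Fin m → Fin k → Bool}
    {α : {S : Finset (Fin m) // S.Nonempty} → ℝ} {q : (Fin k → Bool) → ℝ} (hq : ProbVec q) :
    Sobj c g Q α ≤ eNorm (Tmat c g Q *ᵥ q - α) :=
  csInf_le ⟨0, by rintro _ ⟨_, _, rfl⟩; exact Real.sqrt_nonneg _⟩ ⟨q, hq, rfl⟩

theorem le_Sobj {c g : Fin m → ℝ} {Q : Fin m → Fin k → Bool}
    {α : {S : Finset (Fin m) // S.Nonempty} → ℝ} {b : ℝ}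
    (h : ∀ q, ProbVec q → b ≤ eNorm (Tmat c g Q *ᵥ q - α)) : b ≤ Sobj c g Q α :=
  le_csInf ⟨_, _, single_mem_stdSimplex ℝ 0, rfl⟩ fun _ ⟨q, hq, hx⟩ => hx ▸ h q hq

theorem qEquiv_of_Sobj_le_of_eNorm_lt {c g : Fin m → ℝ} {Q Q' : Fin m → Fin k → Bool}
    {p : (Fin k → Bool) → ℝ} (hp : ProbVec p) {δ : ℝ}
    (hsep : ∀ Q'', ¬QEquiv Q Q'' → ∀ q, ProbVec q →
      δ ≤ eNorm (Tmat c g Q'' *ᵥ q - Tmat c g Q *ᵥ p))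
    {a : {S : Finset (Fin m) // S.Nonempty} → ℝ} (hmin : Sobj c g Q' a ≤ Sobj c g Q a)
    (ha : eNorm (a - Tmat c g Q *ᵥ p) < δ / 2) : QEquiv Q Q' := by
  by_contra hne
  have hupper : Sobj c g Q' a ≤ eNorm (a - Tmat c g Q *ᵥ p) :=
    hmin.trans ((Sobj_le hp).trans_eq (eNorm_sub_comm _ _))
  have hlower : δ - eNorm (a - Tmat c g Q *ᵥ p) ≤ Sobj c g Q' a := le_Sobj fun q hq => by
    linarith [hsep Q' hne q hq, eNorm_sub_le_add (Tmat c g Q' *ᵥ q) a (Tmat c g Q *ᵥ p)]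
  linarith

theorem piDINA_mem_Icc {c g : Fin m → ℝ} (hc : ∀ i, c i ∈ Set.Icc (0 : ℝ) 1)
    (hg : ∀ i, g i ∈ Set.Icc (0 : ℝ) 1) (Q : Fin m → Fin k → Bool) (i : Fin m)
    (A : Fin k → Bool) : piDINA c g Q i A ∈ Set.Icc (0 : ℝ) 1 := by
  unfold piDINA xiDINA
  split_ifs
  · simpa using hc i
  · simpa using hg i

theorem dinaPMF_nonneg {c g : Fin m → ℝ} (hc : ∀ i, c i ∈ Set.Icc (0 : ℝ) 1)
    (hg : ∀ i, g i ∈ Set.Icc (0 : ℝ) 1) (Q : Fin m → Fin k → Bool) {p : (Fin k → Bool) → ℝ}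
    (hp : ∀ A, 0 ≤ p A) (a : Fin k → Bool) (r : Fin m → Bool) : 0 ≤ dinaPMF c g Q p a r := by
  refine mul_nonneg (hp a) (prod_nonneg fun i _ => ?_)
  have := piDINA_mem_Icc hc hg Q i a
  split_ifs
  · exact this.1
  · exact sub_nonneg.2 this.2

theorem sum_dinaPMF_mul_prod (c g : Fin m → ℝ) (Q : Fin m → Fin k → Bool)
    (p : (Fin k → Bool) → ℝ) (S : Finset (Fin m)) (a : Fin k → Bool) :
    ∑ r, dinaPMF c g Q p a r * ∏ i ∈ S, (if r i then 1 else 0) = p a * Tent c g Q S a := by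
  simp only [dinaPMF, mul_assoc, ← mul_sum, sum_prod_ite_mul_prod_ite, Tent]

theorem measurable_alphaVec {Ω : Type*} [MeasurableSpace Ω] {R : ℕ → Ω → (Fin m → Bool)}
    (hR : ∀ n, Measurable (R n)) (N : ℕ) : Measurable fun ω => alphaVec (fun r => R r ω) N := by
  refine measurable_pi_lambda _ fun S => ?_
  refine (Finset.measurable_sum _ fun r _ => ?_).div_const _
  exact (Measurable.of_discrete
    (f := fun x : Fin m → Bool => ∏ i ∈ S.1, if x i then (1 : ℝ) else 0)).comp (hR r)

section Sampling

variable {Ω : Type*} [MeasurableSpace Ω] {P : Measure Ω}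
  {c g : Fin m → ℝ} {Q : Fin m → Fin k → Bool} {p : (Fin k → Bool) → ℝ}
  {A : ℕ → Ω → (Fin k → Bool)} {R : ℕ → Ω → (Fin m → Bool)}

theorem measure_preimage_pair_singleton
    (hdist : ∀ n a r, P {ω | A n ω = a ∧ R n ω = r} = ENNReal.ofReal (dinaPMF c g Q p a r))
    (n : ℕ) (x : (Fin k → Bool) × (Fin m → Bool)) :
    P ((fun ω => (A n ω, R n ω)) ⁻¹' {x}) = ENNReal.ofReal (dinaPMF c g Q p x.1 x.2) := by
  rw [← hdist n]
  congr 1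
  ext ω
  simp [Prod.ext_iff]

theorem integral_prod_response [IsFiniteMeasure P] (hc : ∀ i, c i ∈ Set.Icc (0 : ℝ) 1)
    (hg : ∀ i, g i ∈ Set.Icc (0 : ℝ) 1) (hp : ProbVec p)
    (hmeas : ∀ n, Measurable fun ω => (A n ω, R n ω))
    (hdist : ∀ n a r, P {ω | A n ω = a ∧ R n ω = r} = ENNReal.ofReal (dinaPMF c g Q p a r))
    (n : ℕ) (S : Finset (Fin m)) :
    ∫ ω, ∏ i ∈ S, (if R n ω i then 1 else 0) ∂P = ∑ a, Tent c g Q S a * p a := by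
  rw [integral_comp_eq_sum (hmeas n) (fun x => dinaPMF_nonneg hc hg Q hp.1 x.1 x.2)
    (measure_preimage_pair_singleton hdist n) fun x => ∏ i ∈ S, (if x.2 i then 1 else 0),
    Fintype.sum_prod_type]
  simp only [sum_dinaPMF_mul_prod, mul_comm]

theorem ae_tendsto_alphaVec [IsFiniteMeasure P] (hc : ∀ i, c i ∈ Set.Icc (0 : ℝ) 1)
    (hg : ∀ i, g i ∈ Set.Icc (0 : ℝ) 1) (hp : ProbVec p)
    (hmeas : ∀ n, Measurable fun ω => (A n ω, R n ω))
    (hindep : iIndepFun (fun n ω => (A n ω, R n ω)) P)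
    (hdist : ∀ n a r, P {ω | A n ω = a ∧ R n ω = r} = ENNReal.ofReal (dinaPMF c g Q p a r)) :
    ∀ᵐ ω ∂P, Tendsto (fun N => alphaVec (fun r => R r ω) N) atTop (𝓝 (Tmat c g Q *ᵥ p)) := by
  simp_rw [tendsto_pi_nhds]
  refine ae_all_iff.2 fun S => ?_
  set φ : (Fin k → Bool) × (Fin m → Bool) → ℝ := fun x => ∏ i ∈ S.1, (if x.2 i then 1 else 0)
  have hφ : Measurable φ := .of_discrete
  have hbound (x) : ‖φ x‖ ≤ 1 := by
    simp only [φ, prod_boole]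
    split_ifs <;> simp
  have hslln := strong_law_ae (fun n ω => φ (A n ω, R n ω))
    ((integrable_const 1).mono' (hφ.comp (hmeas 0)).aestronglyMeasurable
      (.of_forall fun _ => hbound _))
    (fun i j hij => (hindep.indepFun hij).comp hφ hφ)
    fun n => (identDistrib_of_measure_preimage_singleton (hmeas n) (hmeas 0) fun x => by
      rw [measure_preimage_pair_singleton hdist, measure_preimage_pair_singleton hdist]).comp hφ
  rw [integral_prod_response hc hg hp hmeas hdist] at hslln
  filter_upwards [hslln] with ω hω
  simpa [alphaVec, Tmat, mulVec, dotProduct, div_eq_inv_mul] using hω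

theorem tendsto_measure_le_eNorm_alphaVec_sub [IsFiniteMeasure P]
    (hc : ∀ i, c i ∈ Set.Icc (0 : ℝ) 1) (hg : ∀ i, g i ∈ Set.Icc (0 : ℝ) 1) (hp : ProbVec p)
    (hmeas : ∀ n, Measurable fun ω => (A n ω, R n ω))
    (hindep : iIndepFun (fun n ω => (A n ω, R n ω)) P)
    (hdist : ∀ n a r, P {ω | A n ω = a ∧ R n ω = r} = ENNReal.ofReal (dinaPMF c g Q p a r))
    (ε : ℝ) (hε : 0 < ε) :
    Tendsto (fun N => P {ω | ε ≤ eNorm (alphaVec (fun r => R r ω) N - Tmat c g Q *ᵥ p)}) atTop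
      (𝓝 0) := by
  have hR (n : ℕ) : Measurable (R n) := measurable_snd.comp (hmeas n)
  have := tendstoInMeasure_iff_dist.1 (tendstoInMeasure_of_tendsto_ae
    (f := fun N ω => WithLp.toLp 2 (alphaVec (fun r => R r ω) N))
    (g := fun _ => WithLp.toLp 2 (Tmat c g Q *ᵥ p))
    (fun N => (PiLp.continuous_toLp 2 _).comp_aestronglyMeasurable
      (measurable_alphaVec hR N).aestronglyMeasurable)
    (by
      filter_upwards [ae_tendsto_alphaVec hc hg hp hmeas hindep hdist] with ω hω
      exact ((PiLp.continuous_toLp 2 _).tendsto _).comp hω)) ε hε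
  simpa only [eNorm_sub_eq_dist] using this

end Sampling

section Consistency

variable {Ω : Type*} [MeasurableSpace Ω] {P : Measure Ω} [IsProbabilityMeasure P]
  {c g : Fin m → ℝ} {Q : Fin m → Fin k → Bool} {p : (Fin k → Bool) → ℝ}
  {α : ℕ → Ω → {S : Finset (Fin m) // S.Nonempty} → ℝ}

theorem tendsto_measure_qEquiv (hcg : Ncong c g) (hQ : Complete Q) (hp : ProbVec p)
    (hdiv : ∀ A, 0 < p A)
    (hα : ∀ ε, 0 < ε → Tendsto (fun N => P {ω | ε ≤ eNorm (α N ω - Tmat c g Q *ᵥ p)}) atTop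
      (𝓝 0))
    {Qhat : ℕ → Ω → (Fin m → Fin k → Bool)}
    (hQhat : ∀ N ω, Sobj c g (Qhat N ω) (α N ω) ≤ Sobj c g Q (α N ω)) :
    Tendsto (fun N => P {ω | QEquiv Q (Qhat N ω)}) atTop (𝓝 1) := by
  obtain ⟨δ, hδ, hsep⟩ := exists_pos_le_eNorm_of_not_qEquiv hcg hQ hp.2 hdiv
  refine tendsto_measure_of_tendsto_measure_compl <| tendsto_of_tendsto_of_tendsto_of_le_of_le
    tendsto_const_nhds (hα (δ / 2) (half_pos hδ)) (fun _ => zero_le)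
    fun N => measure_mono fun ω hω => ?_
  by_contra hlt
  exact hω (qEquiv_of_Sobj_le_of_eNorm_lt hp hsep (hQhat N ω) (not_le.1 hlt))

theorem exists_measurable_perm_tendsto {Qhat : ℕ → Ω → (Fin m → Fin k → Bool)}
    (hmeas : ∀ N, Measurable (Qhat N))
    (h : Tendsto (fun N => P {ω | QEquiv Q (Qhat N ω)}) atTop (𝓝 1)) :
    ∃ Qbar : ℕ → Ω → (Fin m → Fin k → Bool), (∀ N, Measurable (Qbar N)) ∧
      (∀ N ω, QEquiv (Qhat N ω) (Qbar N ω)) ∧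
      Tendsto (fun N => P {ω | Qbar N ω = Q}) atTop (𝓝 1) := by
  classical
  refine ⟨fun N ω => if QEquiv Q (Qhat N ω) then Q else Qhat N ω, fun N => ?_, fun N ω => ?_,
    tendsto_of_tendsto_of_tendsto_of_le_of_le h tendsto_const_nhds
      (fun N => measure_mono fun ω hω => if_pos hω) fun _ => prob_le_one⟩
  · exact Measurable.ite (hmeas N (.of_discrete (s := {Q' | QEquiv Q Q'})))
      measurable_const (hmeas N)
  · beta_reduce
    split_ifs with h
    exacts [h.symm, QEquiv.refl _]

theorem tendsto_measure_lt_eNorm_sub (hcg : Ncong c g) (hQ : Complete Q) (hp : ProbVec p)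
    (hα : ∀ ε, 0 < ε → Tendsto (fun N => P {ω | ε ≤ eNorm (α N ω - Tmat c g Q *ᵥ p)}) atTop
      (𝓝 0))
    {Qbar : ℕ → Ω → (Fin m → Fin k → Bool)} (hQbarMeas : ∀ N, Measurable (Qbar N))
    (hQbar : Tendsto (fun N => P {ω | Qbar N ω = Q}) atTop (𝓝 1))
    {phat : ℕ → Ω → ((Fin k → Bool) → ℝ)}
    (hphat : ∀ N ω, ProbVec (phat N ω) ∧ ∀ p', ProbVec p' →
      eNorm (Tmat c g (Qbar N ω) *ᵥ phat N ω - α N ω) ≤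
        eNorm (Tmat c g (Qbar N ω) *ᵥ p' - α N ω))
    (ε : ℝ) (hε : 0 < ε) :
    Tendsto (fun N => P {ω | ε < eNorm (fun a => phat N ω a - p a)}) atTop (𝓝 0) := by
  obtain ⟨δ, hδ, hinj⟩ := exists_pos_le_eNorm_of_le_eNorm_sub hcg hQ hp.2 ε hε
  have hQbarNe : Tendsto (fun N => P {ω | Qbar N ω = Q}ᶜ) atTop (𝓝 0) :=
    tendsto_measure_compl_of_tendsto_measure (fun N => hQbarMeas N (measurableSet_singleton Q))
      hQbar
  have hbad := hQbarNe.add (hα (δ / 2) (half_pos hδ))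
  rw [add_zero] at hbad
  refine tendsto_of_tendsto_of_tendsto_of_le_of_le tendsto_const_nhds hbad (fun _ => zero_le)
    fun N => (measure_mono fun ω hω => ?_).trans (measure_union_le _ _)
  by_contra hgood
  simp only [Set.mem_union, Set.mem_compl_iff, Set.mem_ofPred_eq, not_or, not_not,
    not_le] at hgood
  obtain ⟨hprob, hmin⟩ := hphat N ω
  rw [hgood.1] at hmin
  linarith [hinj _ hprob hω.le, eNorm_sub_le_two_mul_of_le (hmin p hp)]

end Consistency

/-- Theorem 1 (DINA, `c` and `g` known): consistency of the Q-matrix estimator and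
of the attribute-distribution estimator. -/
theorem dina_known_cg_consistency
    {Ω : Type*} [MeasurableSpace Ω] (P : Measure Ω) [IsProbabilityMeasure P]
    (Q : Fin m → Fin k → Bool) (c g : Fin m → ℝ) (p : (Fin k → Bool) → ℝ)
    (hc : ∀ i, c i ∈ Set.Icc (0:ℝ) 1) (hg : ∀ i, g i ∈ Set.Icc (0:ℝ) 1)
    (hQcomp : Complete Q) (hcg : Ncong c g) (hp : ProbVec p) (hdiv : ∀ A, 0 < p A)
    -- the i.i.d. sample from the DINA model; only the responses `R` are observed
    (A : ℕ → Ω → (Fin k → Bool)) (R : ℕ → Ω → (Fin m → Bool))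
    (hmeas : ∀ n, Measurable (fun ω => (A n ω, R n ω)))
    (hindep : iIndepFun (fun n ω => (A n ω, R n ω)) P)
    (hdist : ∀ (n : ℕ) (a : Fin k → Bool) (r : Fin m → Bool),
      P {ω | A n ω = a ∧ R n ω = r} = ENNReal.ofReal (dinaPMF c g Q p a r))
    -- a measurable choice of minimizer of `Q' ↦ S_{c,g}(Q')`
    (Qhat : ℕ → Ω → (Fin m → Fin k → Bool))
    (hQhatMeas : ∀ N, Measurable (Qhat N))
    (hQhatMin : ∀ (N : ℕ) (ω : Ω) (Q' : Fin m → Fin k → Bool),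
      Sobj c g (Qhat N ω) (alphaVec (fun r => R r ω) N) ≤
        Sobj c g Q' (alphaVec (fun r => R r ω) N)) :
    -- conclusion 1: P(Q'_N ∼ Q) → 1
    Tendsto (fun N => P {ω | QEquiv Q (Qhat N ω)}) atTop (nhds 1) ∧
    -- conclusion 2: a measurable column permutation of Q'_N converging to Q exists
    (∃ Qbar : ℕ → Ω → (Fin m → Fin k → Bool),
      (∀ N, Measurable (Qbar N)) ∧
      (∀ N ω, QEquiv (Qhat N ω) (Qbar N ω)) ∧
      Tendsto (fun N => P {ω | Qbar N ω = Q}) atTop (nhds 1)) ∧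
    -- conclusion 3: for any such choice, any measurable minimizing `p̂_N` is consistent
    (∀ Qbar : ℕ → Ω → (Fin m → Fin k → Bool),
      (∀ N, Measurable (Qbar N)) →
      (∀ N ω, QEquiv (Qhat N ω) (Qbar N ω)) →
      Tendsto (fun N => P {ω | Qbar N ω = Q}) atTop (nhds 1) →
      ∀ phat : ℕ → Ω → ((Fin k → Bool) → ℝ),
        (∀ N, Measurable (phat N)) →
        (∀ N ω, ProbVec (phat N ω) ∧ ∀ p', ProbVec p' →
          eNorm (Tmat c g (Qbar N ω) *ᵥ phat N ω - alphaVec (fun r => R r ω) N) ≤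
            eNorm (Tmat c g (Qbar N ω) *ᵥ p' - alphaVec (fun r => R r ω) N)) →
        ∀ ε > (0:ℝ),
          Tendsto (fun N => P {ω | ε < eNorm (fun a => phat N ω a - p a)})
            atTop (nhds 0)) := by
  have hα := tendsto_measure_le_eNorm_alphaVec_sub hc hg hp hmeas hindep hdist
  have hQhat := tendsto_measure_qEquiv hcg hQcomp hp hdiv hα fun N ω => hQhatMin N ω Q
  exact ⟨hQhat, exists_measurable_perm_tendsto hQhatMeas hQhat,
    fun _ hQbarMeas _ hQbar _ _ hphat =>
      tendsto_measure_lt_eNorm_sub hcg hQcomp hp hα hQbarMeas hQbar hphat⟩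

end QMatrix
end

section
/- For every m×k binary matrix Q, every nonempty subset S ⊆ {1,…,m}, and every attribute profile A ∈ {0,1}^k, the entries of the saturated T-matrix T(Q) = T_{1,0}(Q) and the saturated U-matrix U(Q) = U_{1,0}(Q) satisfy T(Q)[S, 1−A] + U(Q)[S, A] = 1, where 1−A denotes the componentwise complementary profile. Equivalently, after reindexing the columns of U(Q) by the complementation A ↦ 1−A, the sum T(Q) + U(Q) is the all-ones matrix. -/
open MeasureTheory ProbabilityTheory Matrix Finset Filter

namespace QMatrix

variable {m k : ℕ}

/-- Duality between the saturated T- and U-matrices: `T(Q)[S, 1-A] + U(Q)[S, A] = 1`. -/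
theorem T_add_U_duality (Q : Fin m → Fin k → Bool) (S : Finset (Fin m)) (hS : S.Nonempty)
    (A : Fin k → Bool) :
    Tent (fun _ => (1:ℝ)) (fun _ => (0:ℝ)) Q S (fun j => !(A j)) +
      Uent (fun _ => (1:ℝ)) (fun _ => (0:ℝ)) Q S A = 1 := by
  unfold Tent Uent piDINA piDINO
  have h : ∀ i ∈ S, ((1:ℝ) - 0) * xiDINA Q i (fun j => !(A j)) + 0
      = 1 - (((1:ℝ) - 0) * xiDINO Q i A + 0) := by
    intro i _
    simp only [xiDINA, xiDINO, sub_zero, one_mul, add_zero]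
    by_cases h : ∃ j, Q i j = true ∧ A j = true
    · obtain ⟨j, hq, ha⟩ := h
      rw [if_neg, if_pos ⟨j, hq, ha⟩]; · ring
      intro hall; have := hall j hq; simp [ha] at this
    · rw [if_pos, if_neg h]; · ring
      intro j hq; by_contra hc
      exact h ⟨j, hq, by simpa using hc⟩
  rw [Finset.prod_congr rfl h]; ring

end QMatrix
end

section
/- Fix positive integers m and k and a vector g* ∈ ℝ^m. There exists a real matrix D of size (2^m − 1) × 2^m, depending only on g* (and on m, k), such that for every m×k binary matrix Q and all c, g ∈ ℝ^m, D · T̃_{c,g}(Q) = T_{c−g*, g−g*}(Q). That is, every row of T_{c−g*, g−g*}(Q) is a fixed linear combination, with coefficients depending only on g*, of the rows of T̃_{c,g}(Q), uniformly over Q, c, and g. -/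
open MeasureTheory ProbabilityTheory Matrix Finset Filter

namespace QMatrix

variable {m k : ℕ}

/-- Existence of the transformation matrix `D_{g*}` with
`D · T̃_{c,g}(Q) = T_{c-g*, g-g*}(Q)` uniformly over `Q`, `c`, `g`. -/
theorem exists_transform_matrix (m k : ℕ) (hm : 0 < m) (hk : 0 < k) (gstar : Fin m → ℝ) :
    ∃ D : Matrix {S : Finset (Fin m) // S.Nonempty} (Finset (Fin m)) ℝ,
      ∀ (Q : Fin m → Fin k → Bool) (c g : Fin m → ℝ),
        D * Ttilde c g Q =
          Tmat (fun i => c i - gstar i) (fun i => g i - gstar i) Q := by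
  refine ⟨fun S S' => if S' ⊆ S.1 then ∏ i ∈ S.1 \ S', (-gstar i) else 0, ?_⟩
  intro Q c g
  ext S A
  simp only [Matrix.mul_apply, Ttilde, Tmat, Tent]
  have hpi : ∀ i, piDINA (fun i => c i - gstar i) (fun i => g i - gstar i) Q i A
      = piDINA c g Q i A + (-gstar i) := by
    intro i; simp only [piDINA]; ring
  rw [Finset.prod_congr rfl (fun i _ => hpi i), Finset.prod_add]
  have hfilt : Finset.univ.filter (· ⊆ S.1) = S.1.powerset := by
    ext t; simp [Finset.mem_powerset]
  calc ∑ S' : Finset (Fin m),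
        (if S' ⊆ S.1 then ∏ i ∈ S.1 \ S', (-gstar i) else 0) * ∏ i ∈ S', piDINA c g Q i A
      = ∑ S' : Finset (Fin m),
        (if S' ⊆ S.1 then (∏ i ∈ S.1 \ S', (-gstar i)) * ∏ i ∈ S', piDINA c g Q i A else 0) := by
        apply Finset.sum_congr rfl; intro S' _; split <;> simp
    _ = ∑ S' ∈ Finset.univ.filter (· ⊆ S.1),
        (∏ i ∈ S.1 \ S', (-gstar i)) * ∏ i ∈ S', piDINA c g Q i A := by
        rw [Finset.sum_filter]
    _ = ∑ S' ∈ S.1.powerset,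
        (∏ i ∈ S', piDINA c g Q i A) * ∏ i ∈ S.1 \ S', (-gstar i) := by
        rw [hfilt]; exact Finset.sum_congr rfl fun _ _ => mul_comm _ _

end QMatrix
end

section
/- For every m×k binary matrix Q, all c, g ∈ ℝ^m, every nonempty subset S ⊆ {1,…,m}, and every attribute profile A ∈ {0,1}^k, one has 1 − U_{c,g}(Q)[S, A] = T_{1−g, 1−c}(Q)[S, 1−A], where 1−c = (1−c_1,…,1−c_m), 1−g = (1−g_1,…,1−g_m), and 1−A is the componentwise complementary profile. Equivalently, after reindexing the columns of U_{c,g}(Q) by complementation, 𝔼 − U_{c,g}(Q) = T_{1−g, 1−c}(Q), where 𝔼 is the all-ones matrix. -/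
open MeasureTheory ProbabilityTheory Matrix Finset Filter

namespace QMatrix

variable {m k : ℕ}

/-- Duality with parameters: `1 - U_{c,g}(Q)[S, A] = T_{1-g, 1-c}(Q)[S, 1-A]`. -/
theorem one_sub_U_eq_T_dual (Q : Fin m → Fin k → Bool) (c g : Fin m → ℝ)
    (S : Finset (Fin m)) (hS : S.Nonempty) (A : Fin k → Bool) :
    1 - Uent c g Q S A =
      Tent (fun i => 1 - g i) (fun i => 1 - c i) Q S (fun j => !(A j)) := by
  unfold Uent Tent
  have hmain : ∀ i ∈ S, (1 - piDINO c g Q i A) =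
      piDINA (fun i => 1 - g i) (fun i => 1 - c i) Q i (fun j => !(A j)) := by
    intro i _
    unfold piDINO piDINA xiDINO xiDINA
    by_cases h : ∃ j, Q i j = true ∧ A j = true
    · obtain ⟨j, hq, ha⟩ := h
      rw [if_pos ⟨j, hq, ha⟩, if_neg]
      · ring
      · intro hall
        have := hall j hq
        simp [ha] at this
    · rw [if_neg h, if_pos]
      · ring
      · intro j hq
        simp only [Bool.not_eq_true']
        by_contra hne
        exact h ⟨j, hq, by simpa using hne⟩
  calc 1 - (1 - ∏ i ∈ S, (1 - piDINO c g Q i A))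
      = ∏ i ∈ S, (1 - piDINO c g Q i A) := by ring
    _ = _ := Finset.prod_congr rfl hmain

end QMatrix
end

section
/- Let n ≥ 1 and let q_1, …, q_n be subsets of {1, …, n} such that |q_i| ≥ 2 for every i. Then there exists h ∈ {1, …, n} such that q_h ⊆ ∪_{i ≠ h} q_i; that is, some q_h contains no element that is private to it among q_1, …, q_n. -/
open MeasureTheory ProbabilityTheory Matrix Finset Filter

namespace QMatrix

variable {m k : ℕ}

/-- Combinatorial lemma: if `q_1, …, q_n ⊆ {1,…,n}` each have at least two elements, then
some `q_h` is contained in the union of the others (i.e. has no private element). -/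
theorem exists_no_private_element (n : ℕ) (hn : 1 ≤ n) (q : Fin n → Finset (Fin n))
    (hq : ∀ i, 2 ≤ (q i).card) :
    ∃ h : Fin n, q h ⊆ (Finset.univ.erase h).biUnion q := by
  by_contra hc
  push_neg at hc
  simp only [Finset.not_subset] at hc
  -- choose a private element p i for each i
  choose p hp hp2 using hc
  -- p i is in no q j for j ≠ i
  have hpriv : ∀ i j, j ≠ i → p i ∉ q j := by
    intro i j hji hmem
    exact hp2 i (Finset.mem_biUnion.mpr ⟨j, Finset.mem_erase.mpr ⟨hji, Finset.mem_univ j⟩, hmem⟩)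
  have hinj : Function.Injective p := by
    intro i j hij
    by_contra hne
    exact hpriv i j (fun e => hne e.symm) (hij ▸ hp j)
  have hsurj : Function.Surjective p := Finite.surjective_of_injective hinj
  -- q 0-index: take any i; q i has a second element x ≠ p i
  obtain ⟨i⟩ : Nonempty (Fin n) := ⟨⟨0, hn⟩⟩
  have : ((q i).erase (p i)).Nonempty := by
    apply Finset.card_pos.mp
    have := Finset.card_erase_of_mem (hp i)
    have := hq i
    omega
  obtain ⟨x, hx⟩ := this
  obtain ⟨j, rfl⟩ := hsurj x
  have hji : j ≠ i := by
    intro e; exact (Finset.mem_erase.mp hx).1 (by rw [e])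
  exact hpriv j i (fun e => hji e.symm) (Finset.mem_of_mem_erase hx)

end QMatrix
end
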